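/- For any α ≠ 0 in a field K of characteristic zero, the Riordan matrix T(-1 | αx - 1) is an involution in the Riordan group: its square is the identity matrix T(1|1). -/

import Mathlib

open PowerSeries

/-- `psComp f g` is the formal composition `f ∘ g`, i.e. the substitution of `g` into `f`
(meaningful when `g` has zero constant term). -/
noncomputable def psComp {K : Type*} [Field K] (f g : K⟦X⟧) : K⟦X⟧ :=
  PowerSeries.mk fun m => ∑ n ∈ Finset.range (m + 1), coeff n f * coeff m (g ^ n)


/-- Entry `(n,k)` of the Riordan matrix `T(f∣g)`: the `k`-th column has generating
function `f·x^k/g^(k+1)` (Luzón–Morón notation). -/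
noncomputable def riordanEntry {K : Type*} [Field K] (f g : K⟦X⟧) (n k : ℕ) : K :=
  coeff n (f * X ^ k * (g ^ (k + 1))⁻¹)

/-- Product of infinite lower triangular matrices. -/
noncomputable def matMul {K : Type*} [Field K] (A B : ℕ → ℕ → K) (n k : ℕ) : K :=
  ∑ j ∈ Finset.range (n + 1), A n j * B j k

/-!
Row `n` of `T(-1 ∣ αx - 1)` lists the coefficients of `(α - y)^n`: its entries are
`(-1)^k C(n,k) α^(n-k)`. So the matrix represents the substitution `y ↦ α - y` on polynomials in
the basis of powers, its square represents substituting twice, and `α - (α - y) = y`.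
-/

theorem Polynomial.coeff_C_sub_X_pow {R : Type*} [CommRing R] (a : R) (n k : ℕ) :
    ((Polynomial.C a - Polynomial.X) ^ n).coeff k = (-1) ^ k * n.choose k * a ^ (n - k) := by
  have h : (Polynomial.C a - Polynomial.X : Polynomial R) =
      Polynomial.C (-1) * (Polynomial.X + Polynomial.C (-a)) := by
    simp only [map_neg, map_one]; ring
  rw [h, mul_pow, ← Polynomial.C_pow, Polynomial.coeff_C_mul, Polynomial.coeff_X_add_C_pow]
  rcases le_or_gt k n with hkn | hnk
  · obtain ⟨m, rfl⟩ := Nat.exists_eq_add_of_le hkn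
    have hsq : ((-1 : R) ^ m) * (-1) ^ m = 1 := by rw [← mul_pow]; simp
    rw [Nat.add_sub_cancel_left, neg_pow a, pow_add]
    linear_combination (a ^ m * (k + m).choose k * (-1) ^ k) * hsq
  · simp [Nat.choose_eq_zero_of_lt hnk]

theorem Polynomial.C_sub_X_comp_C_sub_X {R : Type*} [CommRing R] (a : R) :
    (Polynomial.C a - Polynomial.X).comp (Polynomial.C a - Polynomial.X) = Polynomial.X := by
  simp

theorem PowerSeries.inv_C_mul_X_sub_one_pow {K : Type*} [Field K] (a : K) (d : ℕ) :
    ((C a * X - 1 : K⟦X⟧) ^ (d + 1))⁻¹ =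
      (-1) ^ (d + 1) * rescale a (mk fun n ↦ ((d + n).choose d : K)) := by
  have h : (C a * X - 1 : K⟦X⟧) = -rescale a (1 - X) := by simp
  rw [eq_comm, PowerSeries.eq_inv_iff_mul_eq_one (by simp), h, neg_pow (rescale a _),
    mul_mul_mul_comm, ← mul_pow, neg_one_mul, neg_neg, one_pow, one_mul, ← map_pow, ← map_mul,
    mk_add_choose_mul_one_sub_pow_eq_one, map_one]

theorem riordanEntry_neg_one_C_mul_X_sub_one {K : Type*} [Field K] (a : K) (n k : ℕ) :
    riordanEntry (-1) (C a * X - 1) n k = (-1) ^ k * n.choose k * a ^ (n - k) := by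
  have h : (-1 : K⟦X⟧) * X ^ k * ((C a * X - 1) ^ (k + 1))⁻¹ =
      C ((-1) ^ k) * (X ^ k * rescale a (mk fun n ↦ ((k + n).choose k : K))) := by
    rw [inv_C_mul_X_sub_one_pow, map_pow, map_neg, map_one, pow_succ]; ring
  rw [riordanEntry, h, coeff_C_mul, coeff_X_pow_mul', coeff_rescale, coeff_mk]
  split_ifs with hkn
  · rw [Nat.add_sub_cancel' hkn]; ring
  · simp [Nat.choose_eq_zero_of_lt (not_le.mp hkn)]

theorem matMul_coeff_pow {K : Type*} [Field K] {p : Polynomial K} (hp : p.natDegree ≤ 1)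
    (q : Polynomial K) (n k : ℕ) :
    matMul (fun i j ↦ (p ^ i).coeff j) (fun i j ↦ (q ^ i).coeff j) n k =
      ((p.comp q) ^ n).coeff k := by
  have hdeg : (p ^ n).natDegree < n + 1 :=
    Nat.lt_succ_of_le ((Polynomial.natDegree_pow_le_of_le n hp).trans_eq (mul_one n))
  rw [← Polynomial.pow_comp, Polynomial.comp, Polynomial.eval₂_eq_sum_range' _ hdeg,
    Polynomial.finsetSum_coeff, matMul]
  simp only [Polynomial.coeff_C_mul]

theorem stmt7_general {K : Type*} [Field K] (α : K) :
    ∀ n k : ℕ,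
      matMul (riordanEntry (-1) (C α * X - 1)) (riordanEntry (-1) (C α * X - 1)) n k =
        if n = k then 1 else 0 := by
  intro n k
  have hrows : riordanEntry (-1) (C α * X - 1) =
      fun n k ↦ ((Polynomial.C α - Polynomial.X) ^ n).coeff k := by
    ext i j
    rw [riordanEntry_neg_one_C_mul_X_sub_one, Polynomial.coeff_C_sub_X_pow]
  rw [hrows, matMul_coeff_pow (by compute_degree!), Polynomial.C_sub_X_comp_C_sub_X,
    Polynomial.coeff_X_pow]
  exact if_congr eq_comm rfl rfl

/-- For α ≠ 0, the Riordan matrix T(-1 ∣ αx - 1) is an involution: its square is the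
identity matrix T(1∣1). -/
theorem stmt7 {K : Type*} [Field K] [CharZero K] (α : K) (hα : α ≠ 0) :
    ∀ n k : ℕ,
      matMul (riordanEntry (-1) (C α * X - 1)) (riordanEntry (-1) (C α * X - 1)) n k =
        if n = k then 1 else 0 :=
  stmt7_general α
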